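/- Let 𝒜: ℝ → M_n(ℝ) be continuous with 𝒜(t)_{jk} ≥ 0 for j ≠ k and zero row sums for all t, and let Φ(t,T) be the fundamental solution of Ż = −𝒜(t) Z backward from time T (i.e., ∂_t Φ(t,T) = −𝒜(t)Φ(t,T), Φ(T,T) = I, for t ≤ T). Then Φ(t,T) has nonnegative entries, each row of Φ(t,T) sums to 1, and ‖Φ(t,T) W‖_∞ ≤ ‖W‖_∞ for all W ∈ ℝⁿ and t ≤ T. -/

import Mathlib

/-!
Maximum principle for `ż = -𝒜(t) z`: where a coordinate of `z` is minimal, the off-diagonal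
nonnegativity and zero row sums give `(𝒜 z)ᵢ ≥ 0`, so that coordinate is nonincreasing in `t`
there, and lower bounds on `z(T)` persist to all `t ≤ T` (a linear barrier `ε (T + 1 - t)`
makes the inequality strict, then `ε → 0`). Applied to `z = Φ(·,T) W` with `z(T) = W`, this gives
`min W ≤ Φ(t,T) W ≤ max W`, which contains all three claims.
-/

open Set Filter Topology Matrix

variable {ι : Type*} [Fintype ι]

structure Matrix.IsQMatrix (A : Matrix ι ι ℝ) : Prop where
  nonneg_of_ne : ∀ ⦃i j⦄, i ≠ j → 0 ≤ A i j
  sum_row_eq_zero : ∀ i, ∑ j, A i j = 0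

namespace Matrix.IsQMatrix

variable {A : Matrix ι ι ℝ}

theorem mulVec_add_const (hA : A.IsQMatrix) (v : ι → ℝ) (c : ℝ) :
    A *ᵥ (fun i => v i + c) = A *ᵥ v := by
  ext i
  simp [mulVec, dotProduct, mul_add, Finset.sum_add_distrib, ← Finset.sum_mul,
    hA.sum_row_eq_zero]

theorem mulVec_apply_nonneg_of_forall_le (hA : A.IsQMatrix) {v : ι → ℝ} {i : ι}
    (hv : ∀ j, v i ≤ v j) : 0 ≤ (A *ᵥ v) i := by
  have hcentre : (A *ᵥ v) i = ∑ j, A i j * (v j - v i) := by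
    simp only [mul_sub, Finset.sum_sub_distrib, ← Finset.sum_mul, hA.sum_row_eq_zero, zero_mul,
      sub_zero]
    rfl
  rw [hcentre]
  refine Finset.sum_nonneg fun j _ => ?_
  rcases eq_or_ne i j with rfl | hij
  · simp
  · exact mul_nonneg (hA.nonneg_of_ne hij) (sub_nonneg.2 (hv j))

end Matrix.IsQMatrix

theorem pos_of_pos_of_deriv_neg_of_eq_zero {y y' : ℝ → ι → ℝ}
    (hy : ∀ s, HasDerivAt y (y' s) s) (hy' : ∀ s i, 0 ≤ y s → y s i = 0 → y' s i < 0)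
    {t T : ℝ} (htT : t ≤ T) (hT : ∀ i, 0 < y T i) (i : ι) : 0 < y t i := by
  by_contra! hti
  have hyi : ∀ i, Continuous fun s => y s i := fun i =>
    continuous_iff_continuousAt.2 fun s => (hasDerivAt_pi.1 (hy s) i).continuousAt
  set S := Icc t T ∩ ⋃ i, {s | y s i ≤ 0}
  have hS : IsCompact S := isCompact_Icc.inter_right
    (isClosed_iUnion_of_finite fun i => isClosed_le (hyi i) continuous_const)
  obtain ⟨u, ⟨⟨htu, huT⟩, huS⟩, hmax⟩ :=
    hS.exists_isGreatest ⟨t, ⟨le_rfl, htT⟩, mem_iUnion.2 ⟨i, hti⟩⟩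
  obtain ⟨i₀, hi₀ : y u i₀ ≤ 0⟩ := mem_iUnion.1 huS
  have hpos : ∀ s ∈ Ioc u T, ∀ j, 0 < y s j := by
    intro s hs j
    by_contra! hsj
    exact hs.1.not_ge (hmax ⟨⟨htu.trans hs.1.le, hs.2⟩, mem_iUnion.2 ⟨j, hsj⟩⟩)
  have huT' : u < T := huT.lt_of_ne (by rintro rfl; exact (hT i₀).not_ge hi₀)
  have hright : Ioc u T ∈ 𝓝[>] u := Ioc_mem_nhdsGT huT'
  have hu : 0 ≤ y u := fun j =>
    ge_of_tendsto (hyi j).continuousAt.continuousWithinAt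
      (mem_of_superset hright fun s hs => (hpos s hs j).le)
  have hderiv : y' u i₀ < 0 := hy' u i₀ hu (le_antisymm hi₀ (hu i₀))
  obtain ⟨s, hslope, hs⟩ := ((hasDerivAt_pi.1 (hy u) i₀).hasDerivWithinAt.liminf_right_slope_le
    hderiv |>.and_eventually hright).exists
  rw [slope_def_field] at hslope
  exact hslope.not_ge (div_nonneg (by linarith [hpos s hs i₀]) (by linarith [hs.1]))

def IsKolmogorovBackwardSolution (A : ℝ → Matrix ι ι ℝ) (z : ℝ → ι → ℝ) : Prop :=
  ∀ s, HasDerivAt z (-(A s *ᵥ z s)) s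

namespace IsKolmogorovBackwardSolution

variable {A : ℝ → Matrix ι ι ℝ} {z : ℝ → ι → ℝ}

theorem neg (hz : IsKolmogorovBackwardSolution A z) : IsKolmogorovBackwardSolution A (-z) :=
  fun s => by simpa [mulVec_neg] using (hz s).neg

theorem le_apply_of_le_apply (hA : ∀ s, (A s).IsQMatrix) (hz : IsKolmogorovBackwardSolution A z)
    {t T a : ℝ} (htT : t ≤ T) (hT : ∀ i, a ≤ z T i) (i : ι) : a ≤ z t i := by
  refine le_of_forall_pos_lt_add fun ε hε => ?_
  set δ := ε / (T + 1 - t)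
  have hδ : 0 < δ := div_pos hε (by linarith)
  have hbarrier := pos_of_pos_of_deriv_neg_of_eq_zero
    (y := fun s i => z s i + (δ * (T + 1 - s) - a)) (y' := fun s i => -(A s *ᵥ z s) i - δ)
    (fun s => hasDerivAt_pi.2 fun i => by
      convert (hasDerivAt_pi.1 (hz s) i).fun_add
        ((((hasDerivAt_id' s).const_sub (T + 1)).const_mul δ).sub_const a) using 1
      rw [Pi.neg_apply]
      ring)
    (fun s j hy hyj => by
      have hmin := (hA s).mulVec_apply_nonneg_of_forall_le
        (v := fun i => z s i + (δ * (T + 1 - s) - a)) (i := j) fun k => by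
        simpa [hyj] using hy k
      rw [(hA s).mulVec_add_const] at hmin
      linarith)
    htT (fun i => by
      show 0 < z T i + (δ * (T + 1 - T) - a)
      linarith [hT i]) i
  have hδε : δ * (T + 1 - t) = ε := div_mul_cancel₀ ε (by linarith)
  linarith

theorem apply_mem_Icc (hA : ∀ s, (A s).IsQMatrix) (hz : IsKolmogorovBackwardSolution A z)
    {t T a b : ℝ} (htT : t ≤ T) (hT : ∀ i, z T i ∈ Icc a b) (i : ι) : z t i ∈ Icc a b :=
  ⟨hz.le_apply_of_le_apply hA htT (fun j => (hT j).1) i,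
    neg_le_neg_iff.1 (hz.neg.le_apply_of_le_apply hA htT (fun j => neg_le_neg (hT j).2) i)⟩

end IsKolmogorovBackwardSolution

theorem isKolmogorovBackwardSolution_mulVec {A P : ℝ → Matrix ι ι ℝ}
    (hP : ∀ s i j, HasDerivAt (fun s => P s i j) (-(A s * P s) i j) s) (w : ι → ℝ) :
    IsKolmogorovBackwardSolution A fun s => P s *ᵥ w := fun s => by
  show HasDerivAt _ (-(A s *ᵥ P s *ᵥ w)) s
  rw [mulVec_mulVec, ← neg_mulVec]
  exact hasDerivAt_pi.2 fun i => HasDerivAt.fun_sum fun j _ => (hP s i j).mul_const (w j)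

theorem fundamental_solution_stochastic_general
    (n : ℕ) (𝒜 : ℝ → Matrix (Fin n) (Fin n) ℝ)
    (hoff : ∀ t j k, j ≠ k → 0 ≤ 𝒜 t j k)
    (hrow : ∀ t j, ∑ l, 𝒜 t j l = 0)
    (Φ : ℝ → ℝ → Matrix (Fin n) (Fin n) ℝ)
    (hΦode : ∀ T j k, ∀ t,
      HasDerivAt (fun s => Φ s T j k) (-(∑ l, 𝒜 t j l * Φ t T l k)) t)
    (hΦinit : ∀ T, Φ T T = 1) :
    ∀ t T, t ≤ T →
      (∀ j k, 0 ≤ Φ t T j k) ∧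
      (∀ j, ∑ l, Φ t T j l = 1) ∧
      (∀ W : Fin n → ℝ, ‖(Φ t T).mulVec W‖ ≤ ‖W‖) := by
  intro t T htT
  have hA : ∀ s, (𝒜 s).IsQMatrix := fun s => ⟨hoff s, hrow s⟩
  have bound {w : Fin n → ℝ} {a b : ℝ} (hw : ∀ i, w i ∈ Icc a b) (i : Fin n) :
      (Φ t T *ᵥ w) i ∈ Icc a b :=
    (isKolmogorovBackwardSolution_mulVec (fun s i j => hΦode T i j s) w).apply_mem_Icc hA htT
      (by simpa [hΦinit] using hw) i
  refine ⟨fun j k => ?_, fun j => ?_, fun W => ?_⟩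
  · have hsingle : ∀ i, (Pi.single k 1 : Fin n → ℝ) i ∈ Icc 0 1 := fun i => by
      by_cases h : i = k <;> simp [h]
    simpa [mulVec_single_one] using (bound hsingle j).1
  · simpa [mulVec, dotProduct] using bound (w := fun _ => 1) (a := 1) (b := 1) (by simp) j
  · refine (pi_norm_le_iff_of_nonneg (norm_nonneg W)).2 fun i => ?_
    rw [Real.norm_eq_abs, abs_le]
    exact bound (fun j => abs_le.1 (by simpa using norm_le_pi_norm W j)) i

/-- The backward fundamental solution `Φ(t,T)` of `Ż = -𝒜(t) Z`, where each
`𝒜(t)` is a Metzler matrix with zero row sums, has nonnegative entries, rows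
summing to 1, and is a sup-norm contraction. -/
theorem fundamental_solution_stochastic
    (n : ℕ) (𝒜 : ℝ → Matrix (Fin n) (Fin n) ℝ)
    (hcont : ∀ j k, Continuous fun t => 𝒜 t j k)
    (hoff : ∀ t j k, j ≠ k → 0 ≤ 𝒜 t j k)
    (hrow : ∀ t j, ∑ l, 𝒜 t j l = 0)
    (Φ : ℝ → ℝ → Matrix (Fin n) (Fin n) ℝ)
    (hΦode : ∀ T j k, ∀ t,
      HasDerivAt (fun s => Φ s T j k) (-(∑ l, 𝒜 t j l * Φ t T l k)) t)
    (hΦinit : ∀ T, Φ T T = 1) :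
    ∀ t T, t ≤ T →
      (∀ j k, 0 ≤ Φ t T j k) ∧
      (∀ j, ∑ l, Φ t T j l = 1) ∧
      (∀ W : Fin n → ℝ, ‖(Φ t T).mulVec W‖ ≤ ‖W‖) :=
  fundamental_solution_stochastic_general n 𝒜 hoff hrow Φ hΦode hΦinit
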